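/- arXiv:2005.12505 — 4 statements merged into one kernel-verified Lean document; each statement's English description precedes it below -/
import Mathlib

section
/- Let G be a finite nonempty set of points in Euclidean space ℝ^d, let S = conv(G) be its convex hull, let ∂S denote the set of extreme points of S, and let C = {w₁,…,wₙ} be distinct candidates. Then some candidate wins under consensus voting if and only if there exists i ∈ {1,…,n} such that wᵢ ∈ ⋂_{k ≠ i} ⋂_{v ∈ ∂S} B(v, w_k), where B(v, w) denotes the closed Euclidean ball centred at v with radius ‖w − v‖. Equivalently: there exists i such that for every k ≠ i and every extreme point v of S, ‖v − wᵢ‖ ≤ ‖v − w_k‖. -/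
/-!
A member `v` prefers `w i` to `w j` exactly when `v` lies in the closed half-space
`{v | ‖v - w i‖ ≤ ‖v - w j‖}` bounded by the perpendicular bisector of `w i` and `w j`.
By Krein–Milman, a closed convex set containing the extreme points of the compact convex set
`conv G` contains `conv G`, hence `G`; conversely the extreme points of `conv G` lie in `G`.
-/

open Set
open scoped RealInnerProductSpace

section KreinMilman

variable {E : Type*} [AddCommGroup E] [Module ℝ E] [TopologicalSpace E] [T2Space E]
  [IsTopologicalAddGroup E] [ContinuousSMul ℝ E] [LocallyConvexSpace ℝ E]

theorem IsCompact.extremePoints_subset_iff {K T : Set E} (hK : IsCompact K) (hKconv : Convex ℝ K)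
    (hTconv : Convex ℝ T) (hTclosed : IsClosed T) : K.extremePoints ℝ ⊆ T ↔ K ⊆ T := by
  refine ⟨fun h => ?_, extremePoints_subset.trans⟩
  rw [← closure_convexHull_extremePoints hK hKconv]
  exact closure_minimal (convexHull_min h hTconv) hTclosed

theorem Set.Finite.extremePoints_convexHull_subset_iff {s T : Set E} (hs : s.Finite)
    (hTconv : Convex ℝ T) (hTclosed : IsClosed T) :
    (convexHull ℝ s).extremePoints ℝ ⊆ T ↔ s ⊆ T := by
  rw [(hs.isCompact_convexHull (𝕜 := ℝ)).extremePoints_subset_iff (convex_convexHull ℝ s) hTconv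
    hTclosed, hTconv.convexHull_subset_iff]

end KreinMilman

theorem isClosed_setOf_norm_sub_le_norm_sub {E : Type*} [SeminormedAddCommGroup E] (a b : E) :
    IsClosed {v : E | ‖v - a‖ ≤ ‖v - b‖} :=
  isClosed_le (by fun_prop) (by fun_prop)

section Bisector

variable {E : Type*} [NormedAddCommGroup E] [InnerProductSpace ℝ E]

theorem norm_sub_le_norm_sub_iff_inner_le (a b v : E) :
    ‖v - a‖ ≤ ‖v - b‖ ↔ 2 * ⟪b - a, v⟫ ≤ ‖b‖ ^ 2 - ‖a‖ ^ 2 := by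
  rw [← pow_le_pow_iff_left₀ (norm_nonneg _) (norm_nonneg _) two_ne_zero,
    norm_sub_sq_real, norm_sub_sq_real, inner_sub_left, real_inner_comm a, real_inner_comm b]
  constructor <;> intro h <;> linarith

theorem convex_setOf_norm_sub_le_norm_sub (a b : E) : Convex ℝ {v : E | ‖v - a‖ ≤ ‖v - b‖} := by
  simp_rw [norm_sub_le_norm_sub_iff_inner_le a b]
  exact convex_halfSpace_le ((2 : ℝ) • innerₛₗ ℝ (b - a)).isLinear _

end Bisector

theorem consensus_winner_iff_ball_intersection_general
    {d : ℕ} (G : Finset (EuclideanSpace ℝ (Fin d)))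
    {n : ℕ} (w : Fin n → EuclideanSpace ℝ (Fin d)) :
    (∃ i, ∀ v ∈ G, ∀ j, j ≠ i → ‖v - w i‖ ≤ ‖v - w j‖) ↔
      (∃ i, w i ∈ ⋂ k ∈ {k | k ≠ i},
        ⋂ v ∈ Set.extremePoints ℝ (convexHull ℝ (G : Set (EuclideanSpace ℝ (Fin d)))),
          Metric.closedBall v ‖w k - v‖) := by
  have prefers_on_extremePoints_iff (i j : Fin n) :
      (∀ v ∈ (convexHull ℝ (G : Set _)).extremePoints ℝ, ‖v - w i‖ ≤ ‖v - w j‖) ↔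
        ∀ v ∈ G, ‖v - w i‖ ≤ ‖v - w j‖ :=
    G.finite_toSet.extremePoints_convexHull_subset_iff
      (convex_setOf_norm_sub_le_norm_sub _ _) (isClosed_setOf_norm_sub_le_norm_sub _ _)
  simp only [mem_iInter, Metric.mem_closedBall, dist_eq_norm, mem_ofPred_eq,
    norm_sub_rev (w _) (_ : EuclideanSpace ℝ (Fin d))]
  refine exists_congr fun i => ?_
  constructor
  · exact fun h k hk => (prefers_on_extremePoints_iff i k).2 fun v hv => h v hv k hk
  · exact fun h v hv j hj => (prefers_on_extremePoints_iff i j).1 (h j hj) v hv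

/-- For a finite nonempty set `G` of points in `ℝ^d` with convex hull `S`,
extreme points `∂S`, and distinct candidates `w 1, …, w n`, some candidate wins under
consensus voting iff there is an `i` with
`w i ∈ ⋂_{k ≠ i} ⋂_{v ∈ ∂S} B(v, ‖w k - v‖)`,
where `B(v, r)` is the closed Euclidean ball of centre `v` and radius `r`. -/
theorem consensus_winner_iff_ball_intersection
    {d : ℕ} (G : Finset (EuclideanSpace ℝ (Fin d))) (hG : G.Nonempty)
    {n : ℕ} (w : Fin n → EuclideanSpace ℝ (Fin d)) (hw : Function.Injective w) :
    (∃ i, ∀ v ∈ G, ∀ j, j ≠ i → ‖v - w i‖ ≤ ‖v - w j‖) ↔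
      (∃ i, w i ∈ ⋂ k ∈ {k | k ≠ i},
        ⋂ v ∈ Set.extremePoints ℝ (convexHull ℝ (G : Set (EuclideanSpace ℝ (Fin d)))),
          Metric.closedBall v ‖w k - v‖) :=
  consensus_winner_iff_ball_intersection_general G w
end

section
/- Consider the consensus-voting group process on a convex compact set K ⊆ ℝ² with vol(K) = 1, and let A = K ∩ W be a cap of K with complementary cap Ā = closure(K \ A). Let p = vol(E_K(Ā, A)) be the probability, over one round of two i.i.d. uniform candidates, that a candidate inside Ā is accepted when the convex hull of the group equals A. Then for every t ≥ 1, Pr[Sᵗ ⊆ A] ≤ (1 − p)ᵗ. -/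
/-!
If the hull stays inside the cap `A = K ∩ W` for `t` rounds, then, up to a null event, no
round's candidate pair lies in `E = E_K(Ā, A)`. Indeed, such a pair has a candidate `w ∈ Ā`
whose Voronoi cell contains `A ⊇ G`, so the group accepts `w` (unless it also accepts the other
candidate, which makes an initial member equidistant from both), and then `w ∈ A ∩ Ā ⊆ ∂W`, a
null line. The `t` candidate pairs are i.i.d., so no pair lying in `E` has probability
`(1 - p) ^ t`.
-/

open MeasureTheory Metric Set
open scoped RealInnerProductSpace

noncomputable section

abbrev Pt : Type := EuclideanSpace ℝ (Fin 2)

def vcell (K : Set Pt) (w₁ w₂ : Pt) : Set Pt := {v ∈ K | dist v w₁ ≤ dist v w₂}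

def accEvent (K H A : Set Pt) : Set (Pt × Pt) :=
  {p | p.1 ∈ K ∧ p.2 ∈ K ∧
    ((p.1 ∈ H ∧ A ⊆ vcell K p.1 p.2) ∨ (p.2 ∈ H ∧ A ⊆ vcell K p.2 p.1))}

def Accepts (G : Set Pt) (w₁ w₂ : Pt) : Prop := ∀ v ∈ G, dist v w₁ ≤ dist v w₂

open Classical in
def step (G : Set Pt) (c : Pt × Pt) : Set Pt :=
  if Accepts G c.1 c.2 then insert c.1 G
  else if Accepts G c.2 c.1 then insert c.2 G
  else G

def grp {k : ℕ} (init : Fin k → Pt) (c : ℕ → Pt × Pt) : ℕ → Set Pt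
  | 0 => Set.range init
  | t + 1 => step (grp init c t) (c t)

def extSeq {T : ℕ} (c : Fin T → Pt × Pt) : ℕ → Pt × Pt :=
  fun n => if h : n < T then c ⟨n, h⟩ else 0

def procMeasure (μ : Measure Pt) (k T : ℕ) :
    Measure ((Fin k → Pt) × (Fin T → Pt × Pt)) :=
  (Measure.pi fun _ => μ).prod (Measure.pi fun _ => μ.prod μ)

section Rounds

lemma subset_step (G : Set Pt) (c : Pt × Pt) : G ⊆ step G c := by
  unfold step
  split_ifs
  exacts [subset_insert _ _, subset_insert _ _, le_rfl]

lemma mem_step_of_accepts {G : Set Pt} {c : Pt × Pt} (h : Accepts G c.1 c.2) :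
    c.1 ∈ step G c := by
  simp only [step, if_pos h, mem_insert_iff, true_or]

lemma mem_step_of_accepts_of_not_accepts {G : Set Pt} {c : Pt × Pt}
    (h₁ : ¬Accepts G c.1 c.2) (h₂ : Accepts G c.2 c.1) : c.2 ∈ step G c := by
  simp only [step, if_neg h₁, if_pos h₂, mem_insert_iff, true_or]

variable {k : ℕ} (init : Fin k → Pt)

lemma grp_mono (c : ℕ → Pt × Pt) : Monotone (grp init c) :=
  monotone_nat_of_le_succ fun _ => subset_step _ _

lemma grp_extSeq_succ {t : ℕ} (c : Fin t → Pt × Pt) (s : Fin t) :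
    grp init (extSeq c) (s + 1) = step (grp init (extSeq c) s) (c s) := by
  simp only [grp, extSeq, s.isLt, dite_true]

end Rounds

lemma accepts_of_subset_vcell {K A G : Set Pt} {w x : Pt} (hGA : G ⊆ A)
    (h : A ⊆ vcell K w x) : Accepts G w x :=
  fun _ hv => (h (hGA hv)).2

lemma mem_inter_or_dist_eq_of_mem_accEvent {K H A G : Set Pt} {c : Pt × Pt} {v : Pt}
    (hGA : G ⊆ A) (hv : v ∈ G) (hstep : step G c ⊆ A) (hc : c ∈ accEvent K H A) :
    c.1 ∈ H ∩ A ∨ c.2 ∈ H ∩ A ∨ dist v c.1 = dist v c.2 := by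
  obtain ⟨-, -, ⟨hH, hvc⟩ | ⟨hH, hvc⟩⟩ := hc
  · exact Or.inl ⟨hH, hstep (mem_step_of_accepts (accepts_of_subset_vcell hGA hvc))⟩
  · have h₂ : Accepts G c.2 c.1 := accepts_of_subset_vcell hGA hvc
    by_cases h₁ : Accepts G c.1 c.2
    · exact Or.inr (Or.inr (le_antisymm (h₁ v hv) (h₂ v hv)))
    · exact Or.inr (Or.inl ⟨hH, hstep (mem_step_of_accepts_of_not_accepts h₁ h₂)⟩)

def exceptionalSet (N : Set Pt) : Set (Pt × (Pt × Pt)) :=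
  {p | p.2.1 ∈ N ∨ p.2.2 ∈ N ∨ dist p.1 p.2.1 = dist p.1 p.2.2}

lemma mem_exceptionalSet_of_grp_subset {k t : ℕ} {init : Fin k → Pt} {c : Fin t → Pt × Pt}
    {K H A N : Set Pt} (hN : H ∩ A ⊆ N) (hA : grp init (extSeq c) t ⊆ A) (i : Fin k)
    (s : Fin t) (hc : c s ∈ accEvent K H A) : (init i, c s) ∈ exceptionalSet N := by
  have hgrp : ∀ m ≤ t, grp init (extSeq c) m ⊆ A := fun m hm => (grp_mono init _ hm).trans hA
  have hinit : init i ∈ grp init (extSeq c) s :=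
    grp_mono init _ (Nat.zero_le _) (mem_range_self i)
  have hstep := hgrp (s + 1) s.isLt
  rw [grp_extSeq_succ] at hstep
  rcases mem_inter_or_dist_eq_of_mem_accEvent (hgrp s s.isLt.le) hinit hstep hc with h | h | h
  exacts [Or.inl (hN h), Or.inr (Or.inl (hN h)), Or.inr (Or.inr h)]

lemma closure_diff_inter_subset_frontier (K W : Set Pt) :
    closure (K \ (K ∩ W)) ∩ (K ∩ W) ⊆ frontier W := by
  rw [frontier_eq_closure_inter_closure, sdiff_self_inter]
  exact fun x ⟨hx, _, hxW⟩ => ⟨subset_closure hxW, closure_mono (fun y hy => hy.2) hx⟩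

lemma isClosed_setOf_forall_dist_le (A : Set Pt) :
    IsClosed {p : Pt × Pt | ∀ v ∈ A, dist v p.1 ≤ dist v p.2} := by
  simp only [ofPred_forall]
  exact isClosed_biInter fun v _ =>
    isClosed_le (continuous_const.dist continuous_fst) (continuous_const.dist continuous_snd)

lemma accEvent_subset_prod (K H A : Set Pt) : accEvent K H A ⊆ K ×ˢ K :=
  fun _ hp => ⟨hp.1, hp.2.1⟩

lemma subset_vcell_iff {K A : Set Pt} {w x : Pt} (hAK : A ⊆ K) :
    A ⊆ vcell K w x ↔ ∀ v ∈ A, dist v w ≤ dist v x :=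
  ⟨fun h _ hv => (h hv).2, fun h v hv => ⟨hAK hv, h v hv⟩⟩

lemma isClosed_accEvent {K H A : Set Pt} (hK : IsClosed K) (hH : IsClosed H) (hAK : A ⊆ K) :
    IsClosed (accEvent K H A) := by
  have hP := isClosed_setOf_forall_dist_le A
  have heq : accEvent K H A = K ×ˢ K ∩
      ((Prod.fst ⁻¹' H ∩ {p | ∀ v ∈ A, dist v p.1 ≤ dist v p.2}) ∪
        (Prod.snd ⁻¹' H ∩ Prod.swap ⁻¹' {p | ∀ v ∈ A, dist v p.1 ≤ dist v p.2})) := by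
    ext p
    simp [accEvent, subset_vcell_iff hAK, and_assoc]
  rw [heq]
  exact (hK.prod hK).inter (((hH.preimage continuous_fst).inter hP).union
    ((hH.preimage continuous_snd).inter (hP.preimage continuous_swap)))

lemma volume_accEvent_eq_restrict_prod (K H A : Set Pt) :
    volume (accEvent K H A) = (volume.restrict K).prod (volume.restrict K) (accEvent K H A) := by
  rw [Measure.prod_restrict, Measure.restrict_eq_self _ (accEvent_subset_prod K H A)]
  rfl

lemma measurableSet_exceptionalSet {N : Set Pt} (hN : MeasurableSet N) :
    MeasurableSet (exceptionalSet N) :=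
  ((measurable_fst.comp measurable_snd) hN).union (((measurable_snd.comp measurable_snd) hN).union
    (measurableSet_eq_fun (measurable_fst.dist (measurable_fst.comp measurable_snd))
      (measurable_fst.dist (measurable_snd.comp measurable_snd))))

section Measure

variable {μ : Measure Pt}

lemma measure_prod_dist_eq_eq_zero [SFinite μ] (hμ : ∀ v r, μ (sphere v r) = 0) (v : Pt) :
    μ.prod μ {c | dist v c.1 = dist v c.2} = 0 := by
  refine Measure.measure_prod_null_of_ae_null
    (measurableSet_eq_fun (measurable_const.dist measurable_fst)
      (measurable_const.dist measurable_snd)) (Filter.Eventually.of_forall fun w => ?_)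
  have : Prod.mk w ⁻¹' {c : Pt × Pt | dist v c.1 = dist v c.2} = sphere v (dist v w) := by
    ext x
    rw [mem_preimage, mem_sphere, dist_comm x v]
    exact eq_comm
  simpa [this] using hμ v (dist v w)

lemma measure_exceptionalSet [SFinite μ] {N : Set Pt} (hN : MeasurableSet N)
    (hμN : μ N = 0) (hμ : ∀ v r, μ (sphere v r) = 0) :
    μ.prod (μ.prod μ) (exceptionalSet N) = 0 := by
  refine Measure.measure_prod_null_of_ae_null (measurableSet_exceptionalSet hN)
    (Filter.Eventually.of_forall fun v => ?_)
  have : Prod.mk v ⁻¹' exceptionalSet N =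
      N ×ˢ univ ∪ (univ ×ˢ N ∪ {c | dist v c.1 = dist v c.2}) := by
    ext; simp [exceptionalSet]
  simp only [this, Pi.zero_apply]
  refine measure_union_null ?_ (measure_union_null ?_ (measure_prod_dist_eq_eq_zero hμ v))
  · simp [Measure.prod_prod, hμN]
  · simp [Measure.prod_prod, hμN]

variable [IsProbabilityMeasure μ] {k t : ℕ}

lemma procMeasure_forall_notMem {E : Set (Pt × Pt)} (hE : MeasurableSet E) :
    procMeasure μ k t {ω | ∀ s, ω.2 s ∉ E} = (1 - μ.prod μ E) ^ t := by
  have : {ω : (Fin k → Pt) × (Fin t → Pt × Pt) | ∀ s, ω.2 s ∉ E} =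
      univ ×ˢ univ.pi fun _ => Eᶜ := by
    ext; simp
  rw [this, procMeasure, Measure.prod_prod, Measure.pi_pi, prob_compl_eq_one_sub hE]
  simp

lemma procMeasure_member_candidate (i : Fin k) (s : Fin t) {Z : Set (Pt × (Pt × Pt))}
    (hZ : MeasurableSet Z) :
    procMeasure μ k t {ω | (ω.1 i, ω.2 s) ∈ Z} = μ.prod (μ.prod μ) Z :=
  ((measurePreserving_eval _ i).prod (measurePreserving_eval _ s)).measure_preimage
    hZ.nullMeasurableSet

lemma procMeasure_le_of_forall_mem {E : Set (Pt × Pt)} (hE : MeasurableSet E)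
    {Z : Set (Pt × (Pt × Pt))} (hZ : MeasurableSet Z) (hZ₀ : μ.prod (μ.prod μ) Z = 0)
    (i : Fin k) {S : Set ((Fin k → Pt) × (Fin t → Pt × Pt))}
    (hS : ∀ ω ∈ S, ∀ s, ω.2 s ∈ E → (ω.1 i, ω.2 s) ∈ Z) :
    procMeasure μ k t S ≤ (1 - μ.prod μ E) ^ t := by
  have hsub : S ⊆ {ω | ∀ s, ω.2 s ∉ E} ∪ ⋃ s, {ω | (ω.1 i, ω.2 s) ∈ Z} := by
    intro ω hω
    by_cases h : ∀ s, ω.2 s ∉ E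
    · exact Or.inl h
    · obtain ⟨s, hs⟩ := not_forall_not.1 h
      exact Or.inr (mem_iUnion.2 ⟨s, hS ω hω s hs⟩)
  calc procMeasure μ k t S
      ≤ procMeasure μ k t {ω | ∀ s, ω.2 s ∉ E} +
          procMeasure μ k t (⋃ s, {ω | (ω.1 i, ω.2 s) ∈ Z}) :=
        (measure_mono hsub).trans (measure_union_le _ _)
    _ = (1 - μ.prod μ E) ^ t := by
      rw [procMeasure_forall_notMem hE, measure_iUnion_null fun s => by
        rw [procMeasure_member_candidate i s hZ, hZ₀], add_zero]

end Measure

theorem prob_hull_subset_cap_le_general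
    (K : Set Pt) (hKcomp : IsCompact K) (hKvol : volume K = 1)
    (W : Set Pt) (hW : ∃ (u : Pt) (a : ℝ), u ≠ 0 ∧ W = {x : Pt | ⟪u, x⟫ ≤ a})
    (A : Set Pt) (hA : A = K ∩ W)
    (k : ℕ) (hk : 1 ≤ k) (t : ℕ) :
    procMeasure (volume.restrict K) k t
        {ω | convexHull ℝ (grp ω.1 (extSeq ω.2) t) ⊆ A}
      ≤ (1 - volume (accEvent K (closure (K \ A)) A)) ^ t := by
  have hWconv : Convex ℝ W := by
    obtain ⟨u, a, -, rfl⟩ := hW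
    exact convex_halfSpace_le
      (isBoundedBilinearMap_inner.isBoundedLinearMap_right u).toIsLinearMap a
  subst hA
  have : IsProbabilityMeasure (volume.restrict K) := ⟨by rwa [Measure.restrict_apply_univ]⟩
  have hac : volume.restrict K ≪ volume := Measure.restrict_le_self.absolutelyContinuous
  rw [volume_accEvent_eq_restrict_prod]
  refine procMeasure_le_of_forall_mem
    (isClosed_accEvent hKcomp.isClosed isClosed_closure inter_subset_left).measurableSet
    (measurableSet_exceptionalSet isClosed_frontier.measurableSet)
    (measure_exceptionalSet isClosed_frontier.measurableSet
      (hac (hWconv.addHaar_frontier volume))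
      fun v r => hac (Measure.addHaar_sphere volume v r)) ⟨0, hk⟩ fun ω hω s hs => ?_
  exact mem_exceptionalSet_of_grp_subset (closure_diff_inter_subset_frontier K W)
    ((subset_convexHull ℝ _).trans hω) _ s hs

/-- For the consensus-voting process on a convex compact `K ⊆ ℝ²` of
volume `1`, and a cap `A = K ∩ W` with complementary cap `Ā = closure (K \ A)`, letting
`p = vol (E_K(Ā, A))` be the one-round probability that a candidate inside `Ā` is accepted
when the hull equals `A`, we have `Pr[Sᵗ ⊆ A] ≤ (1 - p)ᵗ` for every `t ≥ 1`. -/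
theorem prob_hull_subset_cap_le
    (K : Set Pt) (hK : Convex ℝ K) (hKcomp : IsCompact K) (hKvol : volume K = 1)
    (W : Set Pt) (hW : ∃ (u : Pt) (a : ℝ), u ≠ 0 ∧ W = {x : Pt | ⟪u, x⟫ ≤ a})
    (A : Set Pt) (hA : A = K ∩ W)
    (k : ℕ) (hk : 1 ≤ k) (t : ℕ) (ht : 1 ≤ t) :
    procMeasure (volume.restrict K) k t
        {ω | convexHull ℝ (grp ω.1 (extSeq ω.2) t) ⊆ A}
      ≤ (1 - volume (accEvent K (closure (K \ A)) A)) ^ t :=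
  prob_hull_subset_cap_le_general K hKcomp hKvol W hW A hA k hk t

end
end

section
/- Let K ⊆ ℝ² be a convex compact set with nonempty interior, let W be a closed half-plane such that K ∩ ∂W is a nondegenerate segment with endpoints z₁ and z₂, let A = K ∩ W be the corresponding cap, and let Ā = closure(K \ A) be the complementary cap (assumed nonempty). Then vol(E_K(A, Ā)) = 2 ∫_A vol( B(z₁, ‖ξ − z₁‖) ∩ B(z₂, ‖ξ − z₂‖) ∩ A ) dξ, where B(z, r) denotes the closed Euclidean ball of centre z and radius r. That is, the one-round probability (with two i.i.d. uniform candidates on K, vol(K)=1) of accepting a candidate inside A given that the convex hull of the group equals Ā is given by this integral. -/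
open MeasureTheory Metric Set
open scoped RealInnerProductSpace

noncomputable section

/-!
Write the cap as `A = K ∩ {⟪u, ·⟫ ≤ a}`, so that the chord `[z₁, z₂]` is `K ∩ {⟪u, ·⟫ = a}` and
the complementary cap is `Ā = K ∩ {a ≤ ⟪u, ·⟫}`. For `w ∈ A`, the cap `Ā` lies in the Voronoi
cell of `w` against `w'` iff `w' ∈ A` and `w` is at least as close as `w'` to both `z₁` and
`z₂`. Necessity: test the cell at `z₁`, `z₂` (and at `w'` itself if `w' ∉ A`). Sufficiency: the
Voronoi half-plane of `w` contains both endpoints, hence the chord; a point of `Ā` strictly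
closer to `w'` would put the whole segment from it to `w'`, which crosses the chord, in the open
half-plane of `w'`.

So `E_K(A, Ā)` is the union of `S = {(ξ, w) ∈ A² : w ∈ B(z₁, |ξ - z₁|) ∩ B(z₂, |ξ - z₂|)}` and
its mirror image. They overlap only where `|w - z₁| = |ξ - z₁|`, a null set since spheres are
null, and Fubini computes `vol S` as the integral.
-/

section Lens

variable {X : Type*} [PseudoMetricSpace X]

def lens (z₁ z₂ ξ : X) : Set X := closedBall z₁ (dist ξ z₁) ∩ closedBall z₂ (dist ξ z₂)

theorem isClosed_setOf_mem_lens (z₁ z₂ : X) : IsClosed {p : X × X | p.2 ∈ lens z₁ z₂ p.1} :=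
  (isClosed_le (by fun_prop) (by fun_prop)).inter (isClosed_le (by fun_prop) (by fun_prop))

end Lens

section InnerProductSpace

variable {E : Type*} [NormedAddCommGroup E] [InnerProductSpace ℝ E] {K : Set E} {u : E} {a : ℝ}
  {z₁ z₂ w₁ w₂ : E}

theorem dist_le_dist_iff_inner (v w₁ w₂ : E) :
    dist v w₁ ≤ dist v w₂ ↔ ⟪w₂ - w₁, v⟫ ≤ (‖w₂‖ ^ 2 - ‖w₁‖ ^ 2) / 2 := by
  rw [← pow_le_pow_iff_left₀ dist_nonneg dist_nonneg two_ne_zero, dist_eq_norm, dist_eq_norm,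
    norm_sub_sq_real, norm_sub_sq_real, inner_sub_left, real_inner_comm v w₁,
    real_inner_comm v w₂]
  constructor <;> intro h <;> linarith

theorem convex_setOf_dist_le_dist (w₁ w₂ : E) : Convex ℝ {v : E | dist v w₁ ≤ dist v w₂} := by
  simp_rw [dist_le_dist_iff_inner]
  exact convex_halfSpace_le (innerₛₗ ℝ (w₂ - w₁)).isLinear _

theorem convex_setOf_dist_lt_dist (w₁ w₂ : E) : Convex ℝ {v : E | dist v w₂ < dist v w₁} := by
  simp_rw [← not_le, dist_le_dist_iff_inner, not_le]
  exact convex_halfSpace_gt (innerₛₗ ℝ (w₂ - w₁)).isLinear _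

theorem frontier_setOf_inner_le (hu : u ≠ 0) :
    frontier {x : E | ⟪u, x⟫ ≤ a} = {x | ⟪u, x⟫ = a} := by
  have hf : innerSL ℝ u ≠ 0 := fun h ↦ hu (by simpa using congr($h u))
  have := (ContinuousLinearMap.isOpenMap_of_ne_zero _ hf).preimage_frontier_eq_frontier_preimage
    (innerSL ℝ u).continuous (Iic a)
  rw [frontier_Iic] at this
  exact this.symm

theorem exists_mem_segment_inner_eq {x y : E} (hy : ⟪u, y⟫ ≤ a) (hx : a ≤ ⟪u, x⟫) :
    ∃ p ∈ segment ℝ x y, ⟪u, p⟫ = a :=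
  (convex_segment x y).isPreconnected.intermediate_value (right_mem_segment ℝ x y)
    (left_mem_segment ℝ x y) (continuous_const.inner continuous_id).continuousOn ⟨hy, hx⟩

theorem closure_diff_setOf_inner_le (hKc : IsClosed K) (hK : Convex ℝ K)
    (hne : (K \ {x | ⟪u, x⟫ ≤ a}).Nonempty) :
    closure (K \ {x | ⟪u, x⟫ ≤ a}) = K ∩ {x | a ≤ ⟪u, x⟫} := by
  refine subset_antisymm (closure_minimal ?_ (hKc.inter (isClosed_le (by fun_prop) (by fun_prop))))
    fun z ⟨hzK, (hz : a ≤ ⟪u, z⟫)⟩ ↦ ?_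
  · exact fun x ⟨hxK, hx⟩ ↦ ⟨hxK, show a ≤ ⟪u, x⟫ from (not_le.1 hx).le⟩
  obtain ⟨y, hyK, hy⟩ := hne
  replace hy : a < ⟪u, y⟫ := not_le.1 hy
  refine closure_mono ?_ (segment_subset_closure_openSegment (left_mem_segment ℝ z y))
  rintro _ ⟨s, t, hs, ht, hst, rfl⟩
  refine ⟨hK hzK hyK hs.le ht.le hst, ?_⟩
  show ¬ ⟪u, s • z + t • y⟫ ≤ a
  rw [not_le, inner_add_right, real_inner_smul_right, real_inner_smul_right]
  calc a = s * a + t * a := by rw [← add_mul, hst, one_mul]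
    _ < s * ⟪u, z⟫ + t * ⟪u, y⟫ :=
      add_lt_add_of_le_of_lt (mul_le_mul_of_nonneg_left hz hs.le) (mul_lt_mul_of_pos_left hy ht)

theorem dist_le_dist_of_mem_lens (hK : Convex ℝ K)
    (hchord : K ∩ {x | ⟪u, x⟫ = a} ⊆ segment ℝ z₁ z₂) (hw : w₁ ∈ lens z₁ z₂ w₂)
    (hw₂ : w₂ ∈ K ∩ {x | ⟪u, x⟫ ≤ a}) {x : E} (hx : x ∈ K ∩ {x | a ≤ ⟪u, x⟫}) :
    dist x w₁ ≤ dist x w₂ := by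
  by_contra! hlt
  have hw₂_closer : dist w₂ w₂ < dist w₂ w₁ := by
    rw [dist_self, dist_pos]
    rintro rfl
    exact hlt.false
  obtain ⟨p, hp, hpa⟩ := exists_mem_segment_inner_eq hw₂.2 hx.2
  have hp_chord : p ∈ segment ℝ z₁ z₂ := hchord ⟨hK.segment_subset hx.1 hw₂.1 hp, hpa⟩
  have hz₁ : dist z₁ w₁ ≤ dist z₁ w₂ := by
    simpa only [mem_closedBall, dist_comm z₁] using hw.1
  have hz₂ : dist z₂ w₁ ≤ dist z₂ w₂ := by
    simpa only [mem_closedBall, dist_comm z₂] using hw.2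
  have hp₁ : dist p w₁ ≤ dist p w₂ :=
    (convex_setOf_dist_le_dist w₁ w₂).segment_subset hz₁ hz₂ hp_chord
  have hp₂ : dist p w₂ < dist p w₁ :=
    (convex_setOf_dist_lt_dist w₁ w₂).segment_subset hlt hw₂_closer hp
  exact hp₁.not_gt hp₂

theorem inter_setOf_le_inner_subset_iff (hK : Convex ℝ K)
    (hchord : K ∩ {x | ⟪u, x⟫ = a} = segment ℝ z₁ z₂) (hw₁ : ⟪u, w₁⟫ ≤ a) (hw₂ : w₂ ∈ K) :
    K ∩ {x | a ≤ ⟪u, x⟫} ⊆ {v | dist v w₁ ≤ dist v w₂} ↔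
      w₂ ∈ K ∩ {x | ⟪u, x⟫ ≤ a} ∧ w₁ ∈ lens z₁ z₂ w₂ := by
  refine ⟨fun h ↦ ⟨⟨hw₂, ?_⟩, ?_, ?_⟩, fun ⟨hw₂A, hw⟩ x hx ↦
    dist_le_dist_of_mem_lens hK hchord.subset hw hw₂A hx⟩
  · change ⟪u, w₂⟫ ≤ a
    by_contra! hlt
    have h₂ : dist w₂ w₁ ≤ dist w₂ w₂ := h ⟨hw₂, hlt.le⟩
    rw [dist_self, dist_le_zero] at h₂
    exact hlt.not_ge (h₂ ▸ hw₁)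
  all_goals
    have hz₁ := hchord ▸ left_mem_segment ℝ z₁ z₂
    have hz₂ := hchord ▸ right_mem_segment ℝ z₁ z₂
  · simpa only [mem_closedBall, mem_ofPred_eq, dist_comm _ z₁] using h ⟨hz₁.1, hz₁.2.ge⟩
  · simpa only [mem_closedBall, mem_ofPred_eq, dist_comm _ z₂] using h ⟨hz₂.1, hz₂.2.ge⟩

end InnerProductSpace

theorem accEvent_eq_preimage_swap_union {K : Set Pt} (hK : Convex ℝ K) (hKc : IsClosed K)
    {u : Pt} {a : ℝ} {z₁ z₂ : Pt} (hchord : K ∩ {x | ⟪u, x⟫ = a} = segment ℝ z₁ z₂)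
    {A : Set Pt} (hA : A = K ∩ {x | ⟪u, x⟫ ≤ a}) (hAbar : (closure (K \ A)).Nonempty) :
    accEvent K A (closure (K \ A)) =
      Prod.swap ⁻¹' {p | p.1 ∈ A ∧ p.2 ∈ lens z₁ z₂ p.1 ∩ A} ∪
        {p | p.1 ∈ A ∧ p.2 ∈ lens z₁ z₂ p.1 ∩ A} := by
  subst hA
  rw [sdiff_self_inter] at hAbar ⊢
  rw [closure_diff_setOf_inner_le hKc hK (closure_nonempty_iff.1 hAbar)]
  have accepted {w₁ w₂ : Pt} (hw₁ : w₁ ∈ K ∩ {x | ⟪u, x⟫ ≤ a}) (hw₂ : w₂ ∈ K) :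
      K ∩ {x | a ≤ ⟪u, x⟫} ⊆ vcell K w₁ w₂ ↔
        w₂ ∈ K ∩ {x | ⟪u, x⟫ ≤ a} ∧ w₁ ∈ lens z₁ z₂ w₂ := by
    rw [vcell, ← inter_ofPred_eq_sep, subset_inter_iff, and_iff_right inter_subset_left]
    exact inter_setOf_le_inner_subset_iff hK hchord hw₁.2 hw₂
  ext ⟨w₁, w₂⟩
  simp only [accEvent, mem_union, mem_preimage, Prod.swap_prod_mk, mem_ofPred_eq]
  constructor
  · rintro ⟨hw₁, hw₂, ⟨hw₁A, h⟩ | ⟨hw₂A, h⟩⟩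
    · obtain ⟨hw₂A, hw⟩ := (accepted hw₁A hw₂).1 h
      exact .inl ⟨hw₂A, hw, hw₁A⟩
    · obtain ⟨hw₁A, hw⟩ := (accepted hw₂A hw₁).1 h
      exact .inr ⟨hw₁A, hw, hw₂A⟩
  · rintro (⟨hw₂A, hw, hw₁A⟩ | ⟨hw₁A, hw, hw₂A⟩)
    · exact ⟨hw₁A.1, hw₂A.1, .inl ⟨hw₁A, (accepted hw₁A hw₂A.1).2 ⟨hw₂A, hw⟩⟩⟩
    · exact ⟨hw₁A.1, hw₂A.1, .inr ⟨hw₂A, (accepted hw₂A hw₁A.1).2 ⟨hw₁A, hw⟩⟩⟩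

namespace MeasureTheory.Measure

variable {α β : Type*} [MeasurableSpace α] [MeasurableSpace β]

theorem prod_setOf_mem_mem (μ : Measure α) (ν : Measure β) [SFinite ν] {A : Set α}
    (hA : MeasurableSet A) {F : α → Set β} (hF : MeasurableSet {p : α × β | p.2 ∈ F p.1}) :
    μ.prod ν {p | p.1 ∈ A ∧ p.2 ∈ F p.1} = ∫⁻ x in A, ν (F x) ∂μ := by
  have hS : MeasurableSet {p : α × β | p.1 ∈ A ∧ p.2 ∈ F p.1} := (measurable_fst hA).inter hF
  rw [prod_apply hS, ← lintegral_indicator hA]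
  congr 1 with x
  by_cases hx : x ∈ A <;> simp [hx]

theorem prod_preimage_swap_union (μ : Measure α) [SFinite μ] {S : Set (α × α)}
    (hS : MeasurableSet S) (hnull : μ.prod μ (Prod.swap ⁻¹' S ∩ S) = 0) :
    μ.prod μ (Prod.swap ⁻¹' S ∪ S) = 2 * μ.prod μ S := by
  have h := measure_union_add_inter (μ := μ.prod μ) (Prod.swap ⁻¹' S) hS
  rwa [hnull, add_zero, measurePreserving_swap.measure_preimage hS.nullMeasurableSet,
    ← two_mul] at h

theorem prod_setOf_dist_eq_eq_zero {E : Type*} [NormedAddCommGroup E] [NormedSpace ℝ E]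
    [Nontrivial E] [FiniteDimensional ℝ E] [MeasurableSpace E] [BorelSpace E]
    (μ : Measure E) [μ.IsAddHaarMeasure] (z : E) :
    μ.prod μ {p | dist p.2 z = dist p.1 z} = 0 :=
  (measure_prod_null (isClosed_eq (by fun_prop) (by fun_prop)).measurableSet).2
    (ae_of_all _ fun x ↦ addHaar_sphere μ z (dist x z))

end MeasureTheory.Measure

theorem accEvent_volume_eq_two_integral_general
    (K : Set Pt) (hK : Convex ℝ K) (hKcomp : IsCompact K)
    (W : Set Pt) (hW : ∃ (u : Pt) (a : ℝ), u ≠ 0 ∧ W = {x : Pt | ⟪u, x⟫ ≤ a})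
    (z₁ z₂ : Pt) (hseg : K ∩ frontier W = segment ℝ z₁ z₂)
    (A : Set Pt) (hA : A = K ∩ W)
    (hAbar : (closure (K \ A)).Nonempty) :
    volume (accEvent K A (closure (K \ A)))
      = 2 * ∫⁻ ξ in A,
          volume (closedBall z₁ (dist ξ z₁) ∩ closedBall z₂ (dist ξ z₂) ∩ A) := by
  obtain ⟨u, a, hu, rfl⟩ := hW
  rw [frontier_setOf_inner_le hu] at hseg
  have hAc : IsClosed A := hA ▸ hKcomp.isClosed.inter (isClosed_le (by fun_prop) (by fun_prop))
  have hlens : MeasurableSet {p : Pt × Pt | p.2 ∈ lens z₁ z₂ p.1 ∩ A} :=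
    ((isClosed_setOf_mem_lens z₁ z₂).inter (hAc.preimage continuous_snd)).measurableSet
  set S := {p : Pt × Pt | p.1 ∈ A ∧ p.2 ∈ lens z₁ z₂ p.1 ∩ A}
  have hS : MeasurableSet S := (measurable_fst hAc.measurableSet).inter hlens
  have hnull : volume.prod volume (Prod.swap ⁻¹' S ∩ S) = 0 :=
    measure_mono_null (fun p hp ↦ le_antisymm hp.2.2.1.1 hp.1.2.1.1)
      (Measure.prod_setOf_dist_eq_eq_zero volume z₁)
  rw [accEvent_eq_preimage_swap_union hK hKcomp.isClosed hseg hA hAbar, Measure.volume_eq_prod,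
    Measure.prod_preimage_swap_union volume hS hnull]
  exact congrArg (2 * ·) (Measure.prod_setOf_mem_mem volume volume (F := (lens z₁ z₂ · ∩ A))
    hAc.measurableSet hlens)

/-- Let `K ⊆ ℝ²` be convex compact with nonempty interior and volume `1`,
`W` a closed half-plane with `K ∩ ∂W` a nondegenerate segment with endpoints `z₁, z₂`,
`A = K ∩ W` the corresponding cap and `Ā = closure (K \ A)` its (nonempty) complementary
cap. Then the one-round probability of accepting a candidate inside `A` given that the
convex hull of the group equals `Ā` satisfies
`vol (E_K(A, Ā)) = 2 ∫_A vol (B(z₁,‖ξ−z₁‖) ∩ B(z₂,‖ξ−z₂‖) ∩ A) dξ`. -/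
theorem accEvent_volume_eq_two_integral
    (K : Set Pt) (hK : Convex ℝ K) (hKcomp : IsCompact K)
    (hKint : (interior K).Nonempty) (hKvol : volume K = 1)
    (W : Set Pt) (hW : ∃ (u : Pt) (a : ℝ), u ≠ 0 ∧ W = {x : Pt | ⟪u, x⟫ ≤ a})
    (z₁ z₂ : Pt) (hz : z₁ ≠ z₂) (hseg : K ∩ frontier W = segment ℝ z₁ z₂)
    (A : Set Pt) (hA : A = K ∩ W)
    (hAbar : (closure (K \ A)).Nonempty) :
    volume (accEvent K A (closure (K \ A)))
      = 2 * ∫⁻ ξ in A,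
          volume (closedBall z₁ (dist ξ z₁) ∩ closedBall z₂ (dist ξ z₂) ∩ A) :=
  accEvent_volume_eq_two_integral_general K hK hKcomp W hW z₁ z₂ hseg A hA hAbar

end
end

section
/- Let ℍ = [0,1]² be the unit square and let 0 < a ≤ b ≤ 1. Let J_{a,b} = {(x,y) ∈ ℍ : x/a + y/b ≤ 1} be the triangular cap of ℍ with perpendicular side lengths a (along the x-axis) and b (along the y-axis). Then vol(E_ℍ(J_{a,b}, closure(ℍ \ J_{a,b}))) ≥ (1/2¹¹)·a⁴·(1 + ln(b/a)). That is, the probability (over two i.i.d. uniform candidates on ℍ) that a candidate inside J_{a,b} is accepted under consensus voting, given that the convex hull of the group equals the complementary cap closure(ℍ \ J_{a,b}), is at least (1/2¹¹)·a⁴·(1 + ln(b/a)). -/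
open MeasureTheory Metric Set
open scoped RealInnerProductSpace ENNReal

noncomputable section

/-- The unit square `[0,1]²` in the plane. -/
def unitSquare : Set Pt := {x : Pt | ∀ i, x i ∈ Set.Icc (0 : ℝ) 1}

/-! For `w₂ ≤ w₁` coordinatewise, `‖v - w₂‖² - ‖v - w₁‖²` is affine in `v` and nondecreasing in
both coordinates, so it is nonnegative on the complementary cap `{v ≥ 0, v₀/a + v₁/b ≥ 1}` as soon
as it is nonnegative at the vertices `(a, 0)` and `(0, b)`. Such pairs fill a box of volume
`a⁴/2304`, and, at each dyadic height `t = 2ʲ a/4 ≤ b/4`, a sheared strip in which `w₁ 1 - w₂ 1`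
ranges over an interval of length `5a²/(144t)`: every strip has the volume `5a⁴/27648`, and the
`⌊log₂ (b/a)⌋ + 1` strips produce the logarithm. In all these pairs `w₂` lies below `w₁`, so their
mirror images are disjoint from them and accepted as well, which doubles the volume. -/

namespace MeasureTheory.Measure

variable {α G : Type*} [MeasurableSpace α] [MeasurableSpace G] [AddGroup G] [MeasurableSub₂ G]

theorem measurableSet_setOf_sub_mem {f : α → G} (hf : Measurable f) {A : Set α} {C : Set G}
    (hA : MeasurableSet A) (hC : MeasurableSet C) :
    MeasurableSet {p : α × G | p.1 ∈ A ∧ p.2 - f p.1 ∈ C} :=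
  (measurable_fst hA).inter ((measurable_snd.sub (hf.comp measurable_fst)) hC)

theorem prod_setOf_sub_mem [MeasurableAdd G] {μ : Measure α} {ν : Measure G} [SFinite ν]
    [ν.IsAddRightInvariant] {f : α → G} (hf : Measurable f) {A : Set α} {C : Set G}
    (hA : MeasurableSet A) (hC : MeasurableSet C) :
    μ.prod ν {p : α × G | p.1 ∈ A ∧ p.2 - f p.1 ∈ C} = μ A * ν C := by
  have hslice : ∀ x, ν (Prod.mk x ⁻¹' {p : α × G | p.1 ∈ A ∧ p.2 - f p.1 ∈ C})
      = A.indicator (fun _ => ν C) x := by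
    intro x
    by_cases hx : x ∈ A
    · rw [Set.indicator_of_mem hx, ← measure_preimage_add_right ν (-f x) C]
      congr 1
      ext y
      simp [hx, sub_eq_add_neg]
    · simp [hx]
  rw [prod_apply (measurableSet_setOf_sub_mem hf hA hC)]
  simp_rw [hslice]
  rw [lintegral_indicator_const hA, mul_comm]

theorem two_mul_prod_le_of_disjoint_swap {μ : Measure α} [SFinite μ] {U E : Set (α × α)} (hU : MeasurableSet U) (hUE : U ⊆ E)
    (hE : Prod.swap ⁻¹' E ⊆ E) (hdisj : Disjoint U (Prod.swap ⁻¹' U)) :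
    2 * μ.prod μ U ≤ μ.prod μ E := by
  have hswap : μ.prod μ (Prod.swap ⁻¹' U) = μ.prod μ U :=
    measurePreserving_swap.measure_preimage hU.nullMeasurableSet
  calc 2 * μ.prod μ U = μ.prod μ (U ∪ Prod.swap ⁻¹' U) := by
        rw [measure_union hdisj (hU.preimage measurable_swap), hswap, two_mul]
    _ ≤ μ.prod μ E := measure_mono (Set.union_subset hUE ((Set.preimage_mono hUE).trans hE))

end MeasureTheory.Measure

def rect (I J : Set ℝ) : Set Pt := {x | x 0 ∈ I ∧ x 1 ∈ J}

theorem measurableSet_rect {I J : Set ℝ} (hI : MeasurableSet I) (hJ : MeasurableSet J) :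
    MeasurableSet (rect I J) :=
  ((by fun_prop : Measurable fun x : Pt => x 0) hI).inter
    ((by fun_prop : Measurable fun x : Pt => x 1) hJ)

theorem volume_rect (I J : Set ℝ) : volume (rect I J) = volume I * volume J := by
  have hrect : rect I J = (MeasurableEquiv.toLp 2 (Fin 2 → ℝ)).symm ⁻¹'
      Set.univ.pi ![I, J] := by
    ext x
    simp [rect, Fin.forall_fin_two]
  rw [hrect,
    (EuclideanSpace.volume_preserving_symm_measurableEquiv_toLp _).measure_preimage_equiv,
    volume_pi_pi, Fin.prod_univ_two]
  rfl

theorem mem_unitSquare_iff {x : Pt} : x ∈ unitSquare ↔ x 0 ∈ Icc 0 1 ∧ x 1 ∈ Icc 0 1 :=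
  Fin.forall_fin_two

def triangularCap (a b : ℝ) : Set Pt := {x ∈ unitSquare | x 0 / a + x 1 / b ≤ 1}

def capAccEvent (a b : ℝ) : Set (Pt × Pt) :=
  accEvent unitSquare (triangularCap a b) (closure (unitSquare \ triangularCap a b))

theorem swap_preimage_accEvent_subset (K H A : Set Pt) :
    Prod.swap ⁻¹' accEvent K H A ⊆ accEvent K H A :=
  fun _ ⟨h₁, h₂, h⟩ => ⟨h₂, h₁, h.symm⟩

theorem le_add_of_le_at_vertices {a b c₀ c₁ k v₀ v₁ : ℝ} (ha : 0 < a) (hb : 0 < b)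
    (hc₀ : 0 ≤ c₀) (hc₁ : 0 ≤ c₁) (hka : k ≤ c₀ * a) (hkb : k ≤ c₁ * b)
    (hv₀ : 0 ≤ v₀) (hv₁ : 0 ≤ v₁) (hv : 1 ≤ v₀ / a + v₁ / b) :
    k ≤ c₀ * v₀ + c₁ * v₁ := by
  have hs : 0 ≤ v₀ / a := div_nonneg hv₀ ha.le
  have ht : 0 ≤ v₁ / b := div_nonneg hv₁ hb.le
  have h₀ : v₀ / a * k ≤ c₀ * v₀ := by
    calc v₀ / a * k ≤ v₀ / a * (c₀ * a) := mul_le_mul_of_nonneg_left hka hs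
      _ = c₀ * v₀ := by field_simp
  have h₁ : v₁ / b * k ≤ c₁ * v₁ := by
    calc v₁ / b * k ≤ v₁ / b * (c₁ * b) := mul_le_mul_of_nonneg_left hkb ht
      _ = c₁ * v₁ := by field_simp
  rcases le_total k 0 with hk | hk
  · nlinarith [mul_nonneg hc₀ hv₀, mul_nonneg hc₁ hv₁]
  · nlinarith [mul_le_mul_of_nonneg_right hv hk]

theorem dist_sq_eq_coord (x y : Pt) : dist x y ^ 2 = (x 0 - y 0) ^ 2 + (x 1 - y 1) ^ 2 := by
  rw [EuclideanSpace.dist_eq, Real.sq_sqrt (by positivity), Fin.sum_univ_two, Real.dist_eq,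
    Real.dist_eq, sq_abs, sq_abs]

theorem closure_diff_triangularCap_subset (a b : ℝ) :
    closure (unitSquare \ triangularCap a b) ⊆ {v ∈ unitSquare | 1 ≤ v 0 / a + v 1 / b} := by
  have hcont : ∀ i : Fin 2, Continuous fun v : Pt => v i := fun _ => by fun_prop
  refine closure_minimal ?_ (IsClosed.inter ?_ ?_)
  · rintro v ⟨hv, hvJ⟩
    exact ⟨hv, le_of_not_gt fun h => hvJ ⟨hv, h.le⟩⟩
  · simp only [unitSquare, Set.ofPred_forall]
    exact isClosed_iInter fun i => isClosed_Icc.preimage (hcont i)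
  · exact isClosed_le continuous_const (((hcont 0).div_const a).add ((hcont 1).div_const b))

theorem dist_le_dist_of_beyond_hypotenuse {a b : ℝ} (ha : 0 < a) (hb : 0 < b) {w₁ w₂ v : Pt}
    (h₀ : w₂ 0 ≤ w₁ 0) (h₁ : w₂ 1 ≤ w₁ 1)
    (hA : (a - w₁ 0) ^ 2 + w₁ 1 ^ 2 ≤ (a - w₂ 0) ^ 2 + w₂ 1 ^ 2)
    (hB : w₁ 0 ^ 2 + (b - w₁ 1) ^ 2 ≤ w₂ 0 ^ 2 + (b - w₂ 1) ^ 2)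
    (hv₀ : 0 ≤ v 0) (hv₁ : 0 ≤ v 1) (hv : 1 ≤ v 0 / a + v 1 / b) :
    dist v w₁ ≤ dist v w₂ := by
  rw [← pow_le_pow_iff_left₀ dist_nonneg dist_nonneg two_ne_zero, dist_sq_eq_coord,
    dist_sq_eq_coord]
  have := le_add_of_le_at_vertices (k := w₁ 0 ^ 2 - w₂ 0 ^ 2 + (w₁ 1 ^ 2 - w₂ 1 ^ 2)) ha hb
    (by linarith : 0 ≤ 2 * (w₁ 0 - w₂ 0)) (by linarith : 0 ≤ 2 * (w₁ 1 - w₂ 1))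
    (by linarith) (by linarith) hv₀ hv₁ hv
  linarith

theorem mem_capAccEvent {a b : ℝ} (ha : 0 < a) (hb : 0 < b) {w₁ w₂ : Pt}
    (hw₁ : w₁ ∈ triangularCap a b) (hw₂ : w₂ ∈ unitSquare)
    (h₀ : w₂ 0 ≤ w₁ 0) (h₁ : w₂ 1 ≤ w₁ 1)
    (hA : (a - w₁ 0) ^ 2 + w₁ 1 ^ 2 ≤ (a - w₂ 0) ^ 2 + w₂ 1 ^ 2)
    (hB : w₁ 0 ^ 2 + (b - w₁ 1) ^ 2 ≤ w₂ 0 ^ 2 + (b - w₂ 1) ^ 2) :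
    (w₁, w₂) ∈ capAccEvent a b := by
  refine ⟨hw₁.1, hw₂, Or.inl ⟨hw₁, fun v hv => ?_⟩⟩
  obtain ⟨hvsq, hvJ⟩ := closure_diff_triangularCap_subset a b hv
  exact ⟨hvsq, dist_le_dist_of_beyond_hypotenuse ha hb h₀ h₁ hA hB (hvsq 0).1 (hvsq 1).1 hvJ⟩

def baseBox (a : ℝ) : Set (Pt × Pt) :=
  rect (Ico (a / 3) (a / 2)) (Ico (a / 3) (a / 2)) ×ˢ rect (Ico 0 (a / 8)) (Ico 0 (a / 8))

/-- Written as a shear of a product so that `Measure.prod_setOf_sub_mem` computes its volume;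
see `mem_strip_iff` for the coordinates. -/
def strip (a t : ℝ) : Set (Pt × Pt) :=
  {p | p.1 ∈ rect (Ico (a / 4) (a / 3)) (Ico t (2 * t)) ∧
    p.2 - p.1 1 • (EuclideanSpace.single 1 1 : Pt) ∈
      rect (Ico 0 (a / 16)) (Ico (-(a ^ 2 / (16 * t))) (-(a ^ 2 / (36 * t))))}

theorem baseBox_subset_capAccEvent {a b : ℝ} (ha : 0 < a) (hab : a ≤ b) (hb : b ≤ 1) :
    baseBox a ⊆ capAccEvent a b := by
  rintro ⟨w₁, w₂⟩ ⟨⟨⟨hx₁, hx₁'⟩, hy₁, hy₁'⟩, ⟨hx₂, hx₂'⟩, hy₂, hy₂'⟩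
  have hb₀ : 0 < b := ha.trans_le hab
  have hcap : w₁ 0 / a + w₁ 1 / b ≤ 1 := by
    have : w₁ 0 / a ≤ 1 / 2 := by rw [div_le_iff₀ ha]; linarith
    have : w₁ 1 / b ≤ 1 / 2 := by rw [div_le_iff₀ hb₀]; linarith
    linarith
  have hgap : 5 * a / 24 ≤ w₁ 0 - w₂ 0 := by linarith
  have hgap' : 5 * a / 24 ≤ w₁ 1 - w₂ 1 := by linarith
  refine mem_capAccEvent ha hb₀ ⟨?_, hcap⟩ ?_ (by linarith) (by linarith) ?_ ?_
  · exact mem_unitSquare_iff.2 ⟨⟨by linarith, by linarith⟩, by linarith, by linarith⟩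
  · exact mem_unitSquare_iff.2 ⟨⟨by linarith, by linarith⟩, by linarith, by linarith⟩
  · nlinarith [mul_le_mul hgap (by linarith : 11 * a / 8 ≤ 2 * a - w₁ 0 - w₂ 0) (by positivity)
      (by linarith)]
  · nlinarith [mul_le_mul hgap' (by linarith : 11 * a / 8 ≤ 2 * b - w₁ 1 - w₂ 1) (by positivity)
      (by linarith)]

theorem mem_strip_iff {a t : ℝ} {p : Pt × Pt} :
    p ∈ strip a t ↔ p.1 ∈ rect (Ico (a / 4) (a / 3)) (Ico t (2 * t)) ∧ p.2 0 ∈ Ico 0 (a / 16) ∧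
      p.1 1 - p.2 1 ∈ Ioc (a ^ 2 / (36 * t)) (a ^ 2 / (16 * t)) := by
  simp only [strip, rect, mem_ofPred_eq, PiLp.sub_apply, PiLp.smul_apply, PiLp.single_apply,
    mem_Ico, mem_Ioc]
  simp only [Fin.isValue, zero_ne_one, ↓reduceIte, smul_eq_mul, mul_zero, mul_one, sub_zero]
  constructor <;> rintro ⟨h₁, h₂, h₃, h₄⟩ <;> refine ⟨h₁, h₂, ?_, ?_⟩ <;> linarith

theorem strip_subset_capAccEvent {a b t : ℝ} (ha : 0 < a) (ht : a / 4 ≤ t) (htb : 4 * t ≤ b)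
    (hb : b ≤ 1) : strip a t ⊆ capAccEvent a b := by
  rintro ⟨w₁, w₂⟩ hw
  obtain ⟨⟨⟨hx₁, hx₁'⟩, hy₁, hy₁'⟩, ⟨hx₂, hx₂'⟩, hd, hd'⟩ := mem_strip_iff.1 hw
  have ht₀ : 0 < t := by linarith
  have hb₀ : 0 < b := by linarith
  have hβ : a ^ 2 / (16 * t) ≤ t := by
    rw [div_le_iff₀ (by positivity)]; nlinarith
  have hα : a ^ 2 / 9 ≤ a ^ 2 / (36 * t) * b := by
    rw [div_mul_eq_mul_div, le_div_iff₀ (by positivity)]; nlinarith [sq_nonneg a]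
  have hα₀ : 0 < a ^ 2 / (36 * t) := by positivity
  have hcap : w₁ 0 / a + w₁ 1 / b ≤ 1 := by
    have : w₁ 0 / a ≤ 1 / 3 := by rw [div_le_iff₀ ha]; linarith
    have : w₁ 1 / b ≤ 1 / 2 := by rw [div_le_iff₀ hb₀]; linarith
    linarith
  refine mem_capAccEvent ha hb₀ ⟨?_, hcap⟩ ?_ (by linarith) (by linarith) ?_ ?_
  · exact mem_unitSquare_iff.2 ⟨⟨by linarith, by linarith⟩, by linarith, by linarith⟩
  · exact mem_unitSquare_iff.2 ⟨⟨by linarith, by linarith⟩, by linarith, by linarith⟩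
  · have hl : (w₁ 1 - w₂ 1) * (w₁ 1 + w₂ 1) ≤ a ^ 2 / (16 * t) * (4 * t) :=
      mul_le_mul hd' (by linarith) (by linarith) (by positivity)
    have hr : 3 * a / 16 * (77 * a / 48) ≤ (w₁ 0 - w₂ 0) * (2 * a - w₁ 0 - w₂ 0) :=
      mul_le_mul (by linarith) (by linarith) (by positivity) (by linarith)
    have : a ^ 2 / (16 * t) * (4 * t) = a ^ 2 / 4 := by field_simp; ring
    nlinarith
  · have hr : a ^ 2 / (36 * t) * b ≤ (w₁ 1 - w₂ 1) * (2 * b - w₁ 1 - w₂ 1) :=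
      mul_le_mul hd.le (by linarith) hb₀.le (by linarith)
    nlinarith

theorem volume_baseBox {a : ℝ} (ha : 0 ≤ a) :
    volume (baseBox a) = ENNReal.ofReal (a ^ 4 / 2304) := by
  rw [baseBox, Measure.volume_eq_prod, Measure.prod_prod, volume_rect, volume_rect,
    Real.volume_Ico, Real.volume_Ico, ← ENNReal.ofReal_mul (by linarith),
    ← ENNReal.ofReal_mul (by linarith), ← ENNReal.ofReal_mul (by nlinarith)]
  ring_nf

theorem measurable_smul_single : Measurable fun x : Pt => x 1 • (EuclideanSpace.single 1 1 : Pt) :=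
  by fun_prop

theorem measurableSet_strip (a t : ℝ) : MeasurableSet (strip a t) :=
  Measure.measurableSet_setOf_sub_mem measurable_smul_single
    (measurableSet_rect measurableSet_Ico measurableSet_Ico)
    (measurableSet_rect measurableSet_Ico measurableSet_Ico)

theorem volume_strip {a t : ℝ} (ha : 0 ≤ a) (ht : 0 < t) :
    volume (strip a t) = ENNReal.ofReal (5 * a ^ 4 / 27648) := by
  rw [strip, Measure.volume_eq_prod, Measure.prod_setOf_sub_mem measurable_smul_single
    (measurableSet_rect measurableSet_Ico measurableSet_Ico)
    (measurableSet_rect measurableSet_Ico measurableSet_Ico), volume_rect, volume_rect,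
    Real.volume_Ico, Real.volume_Ico, Real.volume_Ico, Real.volume_Ico]
  have hwidth : -(a ^ 2 / (36 * t)) - -(a ^ 2 / (16 * t)) = 5 * a ^ 2 / (144 * t) := by
    field_simp; ring
  rw [hwidth, show a / 3 - a / 4 = a / 12 by ring, show 2 * t - t = t by ring, sub_zero,
    ← ENNReal.ofReal_mul (by positivity), ← ENNReal.ofReal_mul (by positivity),
    ← ENNReal.ofReal_mul (by positivity)]
  congr 1
  field_simp
  ring

theorem baseBox_subset_below {a : ℝ} (ha : 0 < a) : baseBox a ⊆ {p | p.2 1 < p.1 1} := by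
  rintro p ⟨⟨-, hy₁, -⟩, -, -, hy₂⟩
  simp only [mem_ofPred_eq]
  linarith

theorem strip_subset_below {a t : ℝ} (ha : 0 < a) (ht : 0 < t) :
    strip a t ⊆ {p | p.2 1 < p.1 1} := by
  intro p hp
  obtain ⟨-, -, hd, -⟩ := mem_strip_iff.1 hp
  simp only [mem_ofPred_eq]
  linarith [show 0 < a ^ 2 / (36 * t) by positivity]

theorem disjoint_baseBox_strip (a t : ℝ) : Disjoint (baseBox a) (strip a t) := by
  rw [disjoint_left]
  rintro p ⟨⟨⟨hx, -⟩, -⟩, -⟩ hp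
  obtain ⟨⟨⟨-, hx'⟩, -⟩, -⟩ := mem_strip_iff.1 hp
  linarith

theorem disjoint_strip_strip {a s t : ℝ} (hst : 2 * s ≤ t) :
    Disjoint (strip a s) (strip a t) := by
  refine disjoint_left.2 fun p hs ht => ?_
  obtain ⟨⟨-, -, hy⟩, -⟩ := mem_strip_iff.1 hs
  obtain ⟨⟨-, hy', -⟩, -⟩ := mem_strip_iff.1 ht
  linarith

def baseBoxAndStrips (a : ℝ) (n : ℕ) : Set (Pt × Pt) :=
  baseBox a ∪ ⋃ j ∈ Finset.range (n + 1), strip a (a / 4 * 2 ^ j)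

theorem baseBoxAndStrips_subset_capAccEvent {a b : ℝ} {n : ℕ} (ha : 0 < a) (hab : a ≤ b)
    (hb : b ≤ 1) (hn : 2 ^ n * a ≤ b) : baseBoxAndStrips a n ⊆ capAccEvent a b := by
  refine union_subset (baseBox_subset_capAccEvent ha hab hb) (iUnion₂_subset fun j hj => ?_)
  have hj : (2 : ℝ) ^ j ≤ 2 ^ n :=
    pow_le_pow_right₀ one_le_two (Nat.lt_succ_iff.1 (Finset.mem_range.1 hj))
  refine strip_subset_capAccEvent ha ?_ ?_ hb
  · nlinarith [one_le_pow₀ (M₀ := ℝ) one_le_two (n := j)]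
  · nlinarith

theorem disjoint_swap_preimage_baseBoxAndStrips {a : ℝ} (ha : 0 < a) (n : ℕ) :
    Disjoint (baseBoxAndStrips a n) (Prod.swap ⁻¹' baseBoxAndStrips a n) := by
  have hbelow : baseBoxAndStrips a n ⊆ {p | p.2 1 < p.1 1} :=
    union_subset (baseBox_subset_below ha)
      (iUnion₂_subset fun _ _ => strip_subset_below ha (by positivity))
  refine disjoint_left.2 fun p hp hp' => ?_
  have h₁ := hbelow hp
  have h₂ := hbelow hp'
  simp only [mem_ofPred_eq, Prod.fst_swap, Prod.snd_swap] at h₁ h₂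
  linarith

theorem measurableSet_baseBoxAndStrips (a : ℝ) (n : ℕ) : MeasurableSet (baseBoxAndStrips a n) :=
  ((measurableSet_rect measurableSet_Ico measurableSet_Ico).prod
    (measurableSet_rect measurableSet_Ico measurableSet_Ico)).union
    (Finset.measurableSet_biUnion _ fun _ _ => measurableSet_strip _ _)

theorem pairwiseDisjoint_dyadic_strips {a : ℝ} (ha : 0 ≤ a) (n : ℕ) :
    (Finset.range n : Set ℕ).PairwiseDisjoint fun j => strip a (a / 4 * 2 ^ j) := by
  have hlt : ∀ i j : ℕ, i < j → Disjoint (strip a (a / 4 * 2 ^ i)) (strip a (a / 4 * 2 ^ j)) := by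
    refine fun i j hij => disjoint_strip_strip ?_
    have : (2 : ℝ) ^ (i + 1) ≤ 2 ^ j := pow_le_pow_right₀ one_le_two hij
    rw [pow_succ] at this
    nlinarith
  intro i _ j _ hij
  rcases lt_or_gt_of_ne hij with h | h
  · exact hlt i j h
  · exact (hlt j i h).symm

theorem volume_baseBoxAndStrips {a : ℝ} (ha : 0 < a) (n : ℕ) :
    volume (baseBoxAndStrips a n) =
      ENNReal.ofReal (a ^ 4 / 2304 + (n + 1) * (5 * a ^ 4 / 27648)) := by
  rw [baseBoxAndStrips, measure_union ?_
      (Finset.measurableSet_biUnion _ fun _ _ => measurableSet_strip _ _),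
    measure_biUnion_finset (pairwiseDisjoint_dyadic_strips ha.le _)
      fun _ _ => measurableSet_strip _ _, volume_baseBox ha.le]
  · simp_rw [volume_strip ha.le (by positivity : 0 < a / 4 * 2 ^ _)]
    rw [Finset.sum_const, Finset.card_range, nsmul_eq_mul, ENNReal.ofReal_add (by positivity)
      (by positivity), ENNReal.ofReal_mul (by positivity)]
    norm_cast
  · exact disjoint_iUnion₂_right.2 fun j _ => disjoint_baseBox_strip _ _

end

/-- Let `0 < a ≤ b ≤ 1` and let
`J_{a,b} = {(x,y) ∈ ℍ : x/a + y/b ≤ 1}` be a triangular cap of the unit square `ℍ` with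
perpendicular side lengths `a` and `b`. Then the probability (over two i.i.d. uniform
candidates on `ℍ`) that a candidate inside `J_{a,b}` is accepted, given that the convex
hull of the group equals the complementary cap `closure (ℍ \ J_{a,b})`, is at least
`(1/2¹¹)·a⁴·(1 + ln (b/a))`. -/
theorem accEvent_triangularCap_volume_ge
    (a b : ℝ) (ha : 0 < a) (hab : a ≤ b) (hb : b ≤ 1) :
    ENNReal.ofReal ((1 / 2 ^ 11) * a ^ 4 * (1 + Real.log (b / a))) ≤
      volume (accEvent unitSquare {x ∈ unitSquare | x 0 / a + x 1 / b ≤ 1}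
        (closure (unitSquare \ {x ∈ unitSquare | x 0 / a + x 1 / b ≤ 1}))) := by
  obtain ⟨n, hn, hn'⟩ := exists_nat_pow_near ((one_le_div ha).2 hab) one_lt_two
  have hlog : Real.log (b / a) < (n + 1) * Real.log 2 := by
    have := Real.log_lt_log (div_pos (ha.trans_le hab) ha) hn'
    rwa [Real.log_pow, Nat.cast_succ] at this
  have hbound : (1 / 2 ^ 11) * a ^ 4 * (1 + Real.log (b / a)) ≤
      2 * (a ^ 4 / 2304 + (n + 1) * (5 * a ^ 4 / 27648)) := by
    nlinarith [Real.log_two_lt_d9, pow_pos ha 4, mul_pos (pow_pos ha 4) n.cast_add_one_pos]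
  calc ENNReal.ofReal ((1 / 2 ^ 11) * a ^ 4 * (1 + Real.log (b / a)))
      ≤ 2 * volume (baseBoxAndStrips a n) := by
        rw [volume_baseBoxAndStrips ha, ← ENNReal.ofReal_ofNat 2,
          ← ENNReal.ofReal_mul zero_le_two]
        exact ENNReal.ofReal_le_ofReal hbound
    _ ≤ volume (capAccEvent a b) := by
        rw [Measure.volume_eq_prod]
        refine Measure.two_mul_prod_le_of_disjoint_swap (measurableSet_baseBoxAndStrips a n)
          (baseBoxAndStrips_subset_capAccEvent ha hab hb ?_) (swap_preimage_accEvent_subset _ _ _)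
          (disjoint_swap_preimage_baseBoxAndStrips ha n)
        rwa [le_div_iff₀ ha] at hn
end
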